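/- arXiv:2212.14463 — 3 statements merged into one kernel-verified Lean document; each statement's English description precedes it below -/
import Mathlib

section
/- For every propositional formula β: β is a theorem of Łukasiewicz's proof system (⊢_Ł β) if and only if there exists a justification term t such that t:β is a theorem of the system JLŁ (⊢_JLŁ t:β). -/
/-- Propositional formulas built from countably many atoms with ¬ and →. -/
inductive PropForm : Type
  | atom : ℕ → PropForm
  | neg  : PropForm → PropForm
  | imp  : PropForm → PropForm → PropForm

/-- Łukasiewicz's Hilbert system: axioms L1, L2, L3 and modus ponens;
derivation from a set of premises `Γ`. -/
inductive LukDeriv : Set PropForm → PropForm → Prop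
  | prem {Γ φ} : φ ∈ Γ → LukDeriv Γ φ
  | ax1 {Γ} (φ ψ : PropForm) : LukDeriv Γ (φ.imp (ψ.imp φ))
  | ax2 {Γ} (φ ψ χ : PropForm) :
      LukDeriv Γ ((φ.imp (ψ.imp χ)).imp ((φ.imp ψ).imp (φ.imp χ)))
  | ax3 {Γ} (φ ψ : PropForm) :
      LukDeriv Γ (((φ.neg).imp (ψ.neg)).imp (ψ.imp φ))
  | mp {Γ φ ψ} : LukDeriv Γ (φ.imp ψ) → LukDeriv Γ φ → LukDeriv Γ ψ

/-- Justification terms: constants, variables, application and sum. -/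
inductive JTerm : Type
  | const : ℕ → JTerm
  | var   : ℕ → JTerm
  | app   : JTerm → JTerm → JTerm
  | sum   : JTerm → JTerm → JTerm

/-- Justification formulas: propositional formulas extended with `t : φ`. -/
inductive JForm : Type
  | atom : ℕ → JForm
  | neg  : JForm → JForm
  | imp  : JForm → JForm → JForm
  | just : JTerm → JForm → JForm

/-- Embedding of propositional formulas into justification formulas. -/
def PropForm.toJ : PropForm → JForm
  | .atom n  => .atom n
  | .neg φ   => .neg φ.toJ
  | .imp φ ψ => .imp φ.toJ ψ.toJ

/-- Schematic constant specification: a distinguished constant for each of the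
three Łukasiewicz axiom schemes. -/
def c1 : JTerm := .const 1
def c2 : JTerm := .const 2
def c3 : JTerm := .const 3

/-- The system JLŁ: the Application and Sum axioms, justified Łukasiewicz axioms
(with schematic constant specification `c1, c2, c3`), modus ponens and
application introduction; derivation from a set of premises `Γ`. -/
inductive JLDeriv : Set JForm → JForm → Prop
  | prem {Γ φ} : φ ∈ Γ → JLDeriv Γ φ
  | appAx {Γ} (s t : JTerm) (φ ψ : JForm) :
      JLDeriv Γ ((JForm.just s (φ.imp ψ)).imp
        ((JForm.just t φ).imp (JForm.just (s.app t) ψ)))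
  | sumL {Γ} (s t : JTerm) (ψ : JForm) :
      JLDeriv Γ ((JForm.just s ψ).imp (JForm.just (s.sum t) ψ))
  | sumR {Γ} (s t : JTerm) (ψ : JForm) :
      JLDeriv Γ ((JForm.just t ψ).imp (JForm.just (s.sum t) ψ))
  | jax1 {Γ} (φ ψ : JForm) :
      JLDeriv Γ (JForm.just c1 (φ.imp (ψ.imp φ)))
  | jax2 {Γ} (φ ψ χ : JForm) :
      JLDeriv Γ (JForm.just c2 ((φ.imp (ψ.imp χ)).imp ((φ.imp ψ).imp (φ.imp χ))))
  | jax3 {Γ} (φ ψ : JForm) :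
      JLDeriv Γ (JForm.just c3 (((φ.neg).imp (ψ.neg)).imp (ψ.imp φ)))
  | mp {Γ φ ψ} : JLDeriv Γ (φ.imp ψ) → JLDeriv Γ φ → JLDeriv Γ ψ
  | appIntro {Γ} {s t : JTerm} {φ ψ : JForm} :
      JLDeriv Γ (JForm.just s (φ.imp ψ)) → JLDeriv Γ (JForm.just t φ) →
      JLDeriv Γ (JForm.just (s.app t) ψ)

/-!
Erasing every justification term `t : φ ↦ φ` maps each JLŁ axiom to an Łukasiewicz axiom or to
an instance of `φ → φ`, and both rules of JLŁ to modus ponens; so `⊢_JLŁ t:β` gives `⊢_Ł β`.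
Conversely, an Łukasiewicz derivation is lifted step by step: axioms are justified by `c1, c2, c3`
and each modus ponens step by application introduction.
-/

def JForm.forget : JForm → PropForm
  | .atom n => .atom n
  | .neg φ => .neg φ.forget
  | .imp φ ψ => .imp φ.forget ψ.forget
  | .just _ φ => φ.forget

@[simp]
lemma PropForm.forget_toJ (φ : PropForm) : φ.toJ.forget = φ := by
  induction φ <;> simp [PropForm.toJ, JForm.forget, *]

lemma LukDeriv.imp_self (Γ : Set PropForm) (φ : PropForm) : LukDeriv Γ (φ.imp φ) :=
  ((LukDeriv.ax2 φ (φ.imp φ) φ).mp (LukDeriv.ax1 φ (φ.imp φ))).mp (LukDeriv.ax1 φ φ)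

lemma JLDeriv.forget {Γ : Set JForm} {φ : JForm} (h : JLDeriv Γ φ) :
    LukDeriv (JForm.forget '' Γ) φ.forget := by
  induction h with
  | prem hφ => exact .prem (Set.mem_image_of_mem _ hφ)
  | appAx | sumL | sumR => exact LukDeriv.imp_self _ _
  | jax1 => exact .ax1 _ _
  | jax2 => exact .ax2 _ _ _
  | jax3 => exact .ax3 _ _
  | mp _ _ ih₁ ih₂ | appIntro _ _ ih₁ ih₂ => exact ih₁.mp ih₂

lemma LukDeriv.exists_justification {Γ : Set PropForm} {Δ : Set JForm} {β : PropForm}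
    (hΓ : ∀ φ ∈ Γ, ∃ t, JLDeriv Δ (.just t φ.toJ)) (h : LukDeriv Γ β) :
    ∃ t, JLDeriv Δ (.just t β.toJ) := by
  induction h with
  | prem hφ => exact hΓ _ hφ
  | ax1 => exact ⟨c1, .jax1 _ _⟩
  | ax2 => exact ⟨c2, .jax2 _ _ _⟩
  | ax3 => exact ⟨c3, .jax3 _ _⟩
  | mp _ _ ih₁ ih₂ =>
    obtain ⟨s, hs⟩ := ih₁
    obtain ⟨t, ht⟩ := ih₂
    exact ⟨s.app t, .appIntro hs ht⟩

/-- `⊢_Ł β` iff there is a justification term `t` with `⊢_JLŁ t:β`. -/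
theorem luk_iff_justified (β : PropForm) :
    LukDeriv ∅ β ↔ ∃ t : JTerm, JLDeriv ∅ (JForm.just t β.toJ) := by
  constructor
  · exact LukDeriv.exists_justification (by simp)
  · rintro ⟨t, ht⟩
    simpa [JForm.forget] using ht.forget
end

section
/- (Internalization for JLŁ.) If a propositional formula β is a theorem of Łukasiewicz's proof system (⊢_Ł β), then there exists a justification term t, built only from constants by application, such that ⊢_JLŁ t:β. -/
/-- Terms built only from constants by application. -/
def JTerm.ConstApp : JTerm → Prop
  | .const _ => True
  | .var _   => False
  | .app s t => s.ConstApp ∧ t.ConstApp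
  | .sum _ _ => False

theorem JTerm.ConstApp.app {s t : JTerm} (hs : s.ConstApp) (ht : t.ConstApp) :
    (s.app t).ConstApp :=
  ⟨hs, ht⟩

theorem LukDeriv.exists_constApp_just {Γ : Set PropForm} {Δ : Set JForm} {β : PropForm}
    (hΓ : ∀ φ ∈ Γ, ∃ t : JTerm, t.ConstApp ∧ JLDeriv Δ (.just t φ.toJ)) (h : LukDeriv Γ β) :
    ∃ t : JTerm, t.ConstApp ∧ JLDeriv Δ (.just t β.toJ) := by
  induction h with
  | prem hφ => exact hΓ _ hφ
  | ax1 φ ψ => exact ⟨c1, trivial, .jax1 _ _⟩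
  | ax2 φ ψ χ => exact ⟨c2, trivial, .jax2 _ _ _⟩
  | ax3 φ ψ => exact ⟨c3, trivial, .jax3 _ _⟩
  | mp _ _ ihImp ihAnte =>
    obtain ⟨s, hs, ds⟩ := ihImp
    obtain ⟨t, ht, dt⟩ := ihAnte
    exact ⟨s.app t, hs.app ht, .appIntro ds dt⟩

/-- Internalization for JLŁ: if `⊢_Ł β` then there is a term `t`,
built only from constants by application, with `⊢_JLŁ t:β`. -/
theorem internalization (β : PropForm) (h : LukDeriv ∅ β) :
    ∃ t : JTerm, t.ConstApp ∧ JLDeriv ∅ (JForm.just t β.toJ) :=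
  h.exists_constApp_just fun _ hφ => absurd hφ (Set.notMem_empty _)
end

section
/- (Inversed internalization for JLŁ.) For every justification term t and propositional formula β: if ⊢_JLŁ t:β, then β is a theorem of Łukasiewicz's proof system, i.e. ⊢_Ł β. The proof is by structural induction on t: if t is a constant c then β is an instance of a Łukasiewicz axiom scheme; if t = [s·u] then previously s:(α→β) and u:α were derived for some α; if t = [s+u] then previously s:β or u:β was derived; and t cannot be a variable since variable terms do not appear in proofs without premises. -/
/-!
Read `t:φ` as "the forgetful projection of `φ` is a theorem of Łukasiewicz's system" and the
connectives classically. Under this reading every axiom of JLŁ is true (the justified axioms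
project to Łukasiewicz axioms, Application is modus ponens in `⊢_Ł`, Sum is trivial) and both
rules preserve truth, so a derivable `t:β` yields `⊢_Ł β`.
-/

namespace JForm

def forget_s2 : JForm → PropForm
  | atom n => .atom n
  | neg φ => .neg φ.forget_s2
  | imp φ ψ => .imp φ.forget_s2 ψ.forget_s2
  | just _ φ => φ.forget_s2

def Holds : JForm → Prop
  | atom _ => True
  | neg φ => ¬ φ.Holds
  | imp φ ψ => φ.Holds → ψ.Holds
  | just _ φ => LukDeriv ∅ φ.forget_s2

theorem holds_of_jlDeriv {Γ : Set JForm} {φ : JForm} (hΓ : ∀ γ ∈ Γ, γ.Holds)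
    (h : JLDeriv Γ φ) : φ.Holds := by
  induction h with
  | prem hmem => exact hΓ _ hmem
  | appAx => exact fun hs ht => .mp hs ht
  | sumL | sumR => exact id
  | jax1 => exact .ax1 _ _
  | jax2 => exact .ax2 _ _ _
  | jax3 => exact .ax3 _ _
  | mp _ _ ihImp ihArg => exact ihImp ihArg
  | appIntro _ _ ihs iht => exact .mp ihs iht

end JForm

@[simp]
theorem PropForm.forget_toJ_s2 (β : PropForm) : β.toJ.forget_s2 = β := by
  induction β with
  | atom => rfl
  | neg φ ih => simp only [toJ, JForm.forget_s2, ih]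
  | imp φ ψ ihφ ihψ => simp only [toJ, JForm.forget_s2, ihφ, ihψ]

/-- Inversed internalization for JLŁ: if `⊢_JLŁ t:β` then `⊢_Ł β`. -/
theorem inversed_internalization (t : JTerm) (β : PropForm)
    (h : JLDeriv ∅ (JForm.just t β.toJ)) : LukDeriv ∅ β := by
  simpa [JForm.Holds] using JForm.holds_of_jlDeriv (by simp) h
end
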